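/- Lower barrier above the vanishing-TT solution (Proposition 3.29): Suppose |t| ≠ 1, μ = 0 and η ≠ 0. Then there exist c > 0 and D > 0 such that for all d ≥ D, if ψ is a solution of the model Lichnerowicz equation L_d with parameters (t, γ, η, μ = 0) and ψ̂ is a solution of L_d with parameters (t, γ, 0, 0), then ψ(x) ≥ ψ̂(x) + c d^{−2q} for all x ∈ ℝ. -/

import Mathlib

open Real Filter

/-- The 2π-periodic function equal to −1 on (−π,0) and 1 on (0,π). -/
noncomputable def lam (x : ℝ) : ℝ := if 0 < Real.sin x then 1 else -1

/-- The critical exponent q = 2n/(n−2). -/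
noncomputable def qex (n : ℕ) : ℝ := 2 * n / ((n : ℝ) - 2)

/-- The coupling constant κ = (n−1)/n. -/
noncomputable def kap (n : ℕ) : ℝ := ((n : ℝ) - 1) / n

/-- A solution of the model Lichnerowicz equation `L_d` with parameters t, γ, η, μ:
a 2π-periodic, positive, C¹ function, twice differentiable off the multiples of π,
satisfying the equation there. -/
def IsModelSolution (n : ℕ) (t γ η μ d : ℝ) (ψ : ℝ → ℝ) : Prop :=
  (∀ x, ψ (x + 2 * Real.pi) = ψ x) ∧
  (∀ x, 0 < ψ x) ∧
  ContDiff ℝ 1 ψ ∧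
  ∀ x : ℝ, (∀ k : ℤ, x ≠ (k : ℝ) * Real.pi) →
    DifferentiableAt ℝ (deriv ψ) x ∧
    -2 * kap n * qex n * d ^ (-(qex n - 2)) * deriv (deriv ψ) x
      - 2 * η ^ 2 * d ^ (-(2 * qex n)) * ψ x ^ (-qex n - 1)
      - kap n * (μ * d ^ (-qex n) + γ + lam x) ^ 2 * ψ x ^ (-qex n - 1)
      + kap n * (t + lam x) ^ 2 * ψ x ^ (qex n - 1) = 0

/-!
Bounding the model solutions goes through almost-extrema: `ψ` is only `C¹` at the multiples
of `π`, but just to the right of a minimum (maximum) there are regular points, with value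
arbitrarily close to the extreme value, where `ψ'' ≥ 0` (`ψ'' ≤ 0`). Evaluating the equation
there bounds the solutions with `μ = 0` and `d ≥ 1` between constants `0 < m ≤ M`
independent of `d`.
At an almost-minimum of `ψ - ψhat`, subtracting the two equations leaves
`2 η² d^{-2q} ψ^{-q-1} ≤ F(ψ) - F(ψhat)`, where `F(y) = κ (t + λ)² y^{q-1} - κ (γ + λ)² y^{-q-1}`
is increasing and satisfies `F(v) - F(u) ≤ K (v - u)` for `m ≤ u ≤ v ≤ M`. Hence
`ψ - ψhat ≥ 2 η² M^{-q-1} d^{-2q} / K` there, and so everywhere.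
-/

open Set Topology Function

-- Two mean value steps: `f' ≥ 0` somewhere on `(x₀, b)`, then `f'' ≥ 0` between `x₀` and
-- that point, since `f' x₀ = 0`.
theorem frequently_deriv2_nonneg_of_isLocalMin {f : ℝ → ℝ} {x₀ : ℝ} (hf : ContDiff ℝ 1 f)
    (hmin : IsLocalMin f x₀) (hf2 : ∀ᶠ y in 𝓝[>] x₀, DifferentiableAt ℝ (deriv f) y) :
    ∃ᶠ y in 𝓝[>] x₀, 0 ≤ deriv (deriv f) y := by
  refine frequently_iff.mpr fun {U} hU => ?_
  obtain ⟨u, hu, hsub⟩ := mem_nhdsGT_iff_exists_Ioo_subset.mp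
    (inter_mem (inter_mem hU hf2) (nhdsWithin_le_nhds hmin))
  obtain ⟨b, hb⟩ := nonempty_Ioo.mpr (mem_Ioi.mp hu)
  obtain ⟨ξ, hξ, hξslope⟩ := exists_deriv_eq_slope f hb.1 hf.continuous.continuousOn
    (hf.differentiable one_ne_zero).differentiableOn
  have hξ_nonneg : 0 ≤ deriv f ξ := by
    rw [hξslope]
    exact div_nonneg (sub_nonneg.mpr (hsub hb).2) (sub_nonneg.mpr hb.1.le)
  have hIoo : Ioo x₀ ξ ⊆ Ioo x₀ u := Ioo_subset_Ioo_right (hξ.2.trans hb.2).le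
  obtain ⟨ζ, hζ, hζslope⟩ := exists_deriv_eq_slope (deriv f) hξ.1
    (hf.continuous_deriv le_rfl).continuousOn
    fun y hy => (hsub (hIoo hy)).1.2.differentiableWithinAt
  refine ⟨ζ, (hsub (hIoo hζ)).1.1, ?_⟩
  rw [hζslope, hmin.deriv_eq_zero, sub_zero]
  exact div_nonneg hξ_nonneg (sub_nonneg.mpr hξ.1.le)

theorem Function.Periodic.le_of_forall_deriv2_nonneg_imp_le {f : ℝ → ℝ} {T m : ℝ}
    {P : ℝ → Prop} (hper : Periodic f T) (hT : T ≠ 0) (hf : ContDiff ℝ 1 f)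
    (hP : ∀ x, ∀ᶠ y in 𝓝[>] x, P y) (hf2 : ∀ x, P x → DifferentiableAt ℝ (deriv f) x)
    (h : ∀ x, P x → 0 ≤ deriv (deriv f) x → m ≤ f x) (x : ℝ) : m ≤ f x := by
  obtain ⟨_, ⟨x₀, rfl⟩, hx₀⟩ :=
    (hper.compact_of_continuous hT hf.continuous).exists_isLeast (range_nonempty f)
  have hmin : ∀ y, f x₀ ≤ f y := fun y => hx₀ (mem_range_self y)
  have hfreq : ∃ᶠ y in 𝓝[>] x₀, m ≤ f y :=
    ((frequently_deriv2_nonneg_of_isLocalMin hf (Eventually.of_forall hmin)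
      ((hP x₀).mono hf2)).and_eventually (hP x₀)).mono fun y hy => h y hy.2 hy.1
  exact (isClosed_Ici.mem_of_frequently_of_tendsto hfreq
    (hf.continuous.continuousAt.tendsto.mono_left nhdsWithin_le_nhds)).trans (hmin x)

theorem Function.Periodic.le_of_forall_deriv2_nonpos_imp_le {f : ℝ → ℝ} {T M : ℝ}
    {P : ℝ → Prop} (hper : Periodic f T) (hT : T ≠ 0) (hf : ContDiff ℝ 1 f)
    (hP : ∀ x, ∀ᶠ y in 𝓝[>] x, P y) (hf2 : ∀ x, P x → DifferentiableAt ℝ (deriv f) x)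
    (h : ∀ x, P x → deriv (deriv f) x ≤ 0 → f x ≤ M) (x : ℝ) : f x ≤ M := by
  have hper' : Periodic (fun y => -f y) T := fun y => by simp only [hper y]
  exact neg_le_neg_iff.mp (hper'.le_of_forall_deriv2_nonneg_imp_le (m := -M) hT hf.neg hP
    (fun y hy => by simpa using (hf2 y hy).neg) (fun y hy hy2 => by
      simp only [deriv.fun_neg', neg_nonneg] at hy2
      exact neg_le_neg (h y hy hy2)) x)

theorem eventually_nhdsGT_ne_int_mul {a : ℝ} (ha : 0 < a) (x : ℝ) :
    ∀ᶠ y in 𝓝[>] x, ∀ k : ℤ, y ≠ k * a := by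
  have hx : x < (⌊x / a⌋ + 1 : ℤ) * a := by
    rw [← div_lt_iff₀ ha]; push_cast; exact Int.lt_floor_add_one _
  filter_upwards [Ioo_mem_nhdsGT hx] with y hy k rfl
  have h1 : ⌊x / a⌋ < k := Int.floor_lt.mpr ((div_lt_iff₀ ha).mpr hy.1)
  have h2 : k < ⌊x / a⌋ + 1 := by exact_mod_cast lt_of_mul_lt_mul_right hy.2 ha.le
  omega

theorem monotoneOn_mul_rpow_sub_mul_rpow {a b p s : ℝ} (ha : 0 ≤ a) (hb : 0 ≤ b)
    (hp : 0 ≤ p) (hs : s ≤ 0) : MonotoneOn (fun y => a * y ^ p - b * y ^ s) (Ioi 0) := by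
  intro u hu v _ huv
  have h1 : u ^ p ≤ v ^ p := rpow_le_rpow (le_of_lt hu) huv hp
  have h2 : v ^ s ≤ u ^ s := rpow_le_rpow_of_nonpos hu huv hs
  dsimp only
  gcongr

theorem mul_rpow_sub_mul_rpow_sub_le {a b p s m M u v : ℝ} (ha : 0 ≤ a) (hb : 0 ≤ b)
    (hp : 1 ≤ p) (hs : s ≤ 0) (hm : 0 < m) (hmu : m ≤ u) (huv : u ≤ v) (hvM : v ≤ M) :
    (a * v ^ p - b * v ^ s) - (a * u ^ p - b * u ^ s)
      ≤ (a * p * M ^ (p - 1) - b * s * m ^ (s - 1)) * (v - u) := by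
  set g : ℝ → ℝ := fun y => a * y ^ p - b * y ^ s
  have hg : ∀ y, 0 < y → HasDerivAt g (a * (p * y ^ (p - 1)) - b * (s * y ^ (s - 1))) y :=
    fun y hy => ((hasDerivAt_rpow_const (Or.inl hy.ne')).const_mul a).sub
      ((hasDerivAt_rpow_const (Or.inl hy.ne')).const_mul b)
  have hpos : ∀ y ∈ Icc m M, 0 < y := fun y hy => hm.trans_le hy.1
  refine (convex_Icc m M).image_sub_le_mul_sub_of_deriv_le
    (fun y hy => (hg y (hpos y hy)).continuousAt.continuousWithinAt)
    (fun y hy => (hg y (hpos y (interior_subset hy))).differentiableAt.differentiableWithinAt)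
    (fun y hy => ?_) u ⟨hmu, huv.trans hvM⟩ v ⟨hmu.trans huv, hvM⟩ huv
  obtain ⟨hmy, hyM⟩ := interior_subset hy
  have hy : 0 < y := hm.trans_le hmy
  have h1 : y ^ (p - 1) ≤ M ^ (p - 1) := rpow_le_rpow hy.le hyM (by linarith)
  have h2 : y ^ (s - 1) ≤ m ^ (s - 1) := rpow_le_rpow_of_nonpos hm hmy (by linarith)
  rw [(hg y hy).deriv]
  nlinarith [mul_le_mul_of_nonneg_left h1 (mul_nonneg ha (by linarith : (0:ℝ) ≤ p)),
    mul_le_mul_of_nonneg_left h2 (mul_nonneg hb (neg_nonneg.mpr hs))]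

theorem lam_eq_one_or_neg_one (x : ℝ) : lam x = 1 ∨ lam x = -1 := by
  unfold lam; split_ifs <;> simp

theorem sq_add_lam_le (t x : ℝ) : (t + lam x) ^ 2 ≤ (|t| + 1) ^ 2 := by
  rcases lam_eq_one_or_neg_one x with h | h <;> rw [h] <;>
    nlinarith [sq_abs t, le_abs_self t, neg_abs_le t]

theorem sq_abs_sub_one_le_sq_add_lam (t x : ℝ) : (|t| - 1) ^ 2 ≤ (t + lam x) ^ 2 := by
  rcases lam_eq_one_or_neg_one x with h | h <;> rw [h] <;>
    nlinarith [sq_abs t, le_abs_self t, neg_abs_le t]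

theorem qex_gt_two {n : ℕ} (hn : 3 ≤ n) : 2 < qex n := by
  have h3 : (3 : ℝ) ≤ n := by exact_mod_cast hn
  rw [qex, lt_div_iff₀ (by linarith)]
  linarith

theorem kap_pos {n : ℕ} (hn : 3 ≤ n) : 0 < kap n := by
  have h3 : (3 : ℝ) ≤ n := by exact_mod_cast hn
  exact div_pos (by linarith) (by linarith)

theorem deriv2_coeff_nonneg {n : ℕ} (hn : 3 ≤ n) {d : ℝ} (hd : 0 ≤ d) :
    0 ≤ 2 * kap n * qex n * d ^ (-(qex n - 2)) := by
  have hq := qex_gt_two hn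
  have hκ := kap_pos hn
  have := rpow_nonneg hd (-(qex n - 2))
  positivity

noncomputable def modelNonlinearity (n : ℕ) (t γ x y : ℝ) : ℝ :=
  kap n * (t + lam x) ^ 2 * y ^ (qex n - 1) - kap n * (γ + lam x) ^ 2 * y ^ (-qex n - 1)

theorem monotoneOn_modelNonlinearity {n : ℕ} (hn : 3 ≤ n) (t γ x : ℝ) :
    MonotoneOn (modelNonlinearity n t γ x) (Ioi 0) := by
  have hq := qex_gt_two hn
  have hκ := kap_pos hn
  exact monotoneOn_mul_rpow_sub_mul_rpow (by positivity) (by positivity) (by linarith)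
    (by linarith)

theorem exists_modelNonlinearity_sub_le {n : ℕ} (hn : 3 ≤ n) (t γ : ℝ) {m M : ℝ} (hm : 0 < m)
    (hM : 0 < M) : ∃ K > 0, ∀ x u v, m ≤ u → u ≤ v → v ≤ M →
      modelNonlinearity n t γ x v - modelNonlinearity n t γ x u ≤ K * (v - u) := by
  have hq := qex_gt_two hn
  have hκ := kap_pos hn
  have hq1 : 0 < qex n - 1 := by linarith
  have hq2 : 0 < qex n + 1 := by linarith
  refine ⟨kap n * (|t| + 1) ^ 2 * (qex n - 1) * M ^ (qex n - 1 - 1)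
      + kap n * (|γ| + 1) ^ 2 * (qex n + 1) * m ^ (-qex n - 1 - 1), by positivity,
    fun x u v hmu huv hvM => ?_⟩
  refine (mul_rpow_sub_mul_rpow_sub_le (by positivity) (by positivity) (by linarith)
    (by linarith) hm hmu huv hvM).trans (mul_le_mul_of_nonneg_right ?_ (sub_nonneg.mpr huv))
  have hMq : 0 ≤ kap n * (qex n - 1) * M ^ (qex n - 1 - 1) := by positivity
  have hmq : 0 ≤ kap n * (qex n + 1) * m ^ (-qex n - 1 - 1) := by positivity
  linear_combination mul_le_mul_of_nonneg_right (sq_add_lam_le t x) hMq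
    + mul_le_mul_of_nonneg_right (sq_add_lam_le γ x) hmq

namespace IsModelSolution

variable {n : ℕ} {t γ η μ d : ℝ} {ψ : ℝ → ℝ}

theorem periodic (hψ : IsModelSolution n t γ η μ d ψ) : Periodic ψ (2 * π) := hψ.1

theorem pos (hψ : IsModelSolution n t γ η μ d ψ) (x : ℝ) : 0 < ψ x := hψ.2.1 x

theorem contDiff (hψ : IsModelSolution n t γ η μ d ψ) : ContDiff ℝ 1 ψ := hψ.2.2.1

theorem differentiableAt_deriv (hψ : IsModelSolution n t γ η μ d ψ) {x : ℝ}
    (hx : ∀ k : ℤ, x ≠ k * π) : DifferentiableAt ℝ (deriv ψ) x := (hψ.2.2.2 x hx).1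

theorem deriv2_eq (hψ : IsModelSolution n t γ η μ d ψ) {x : ℝ} (hx : ∀ k : ℤ, x ≠ k * π) :
    2 * kap n * qex n * d ^ (-(qex n - 2)) * deriv (deriv ψ) x
      = kap n * (t + lam x) ^ 2 * ψ x ^ (qex n - 1)
        - (2 * η ^ 2 * d ^ (-(2 * qex n)) + kap n * (μ * d ^ (-qex n) + γ + lam x) ^ 2)
          * ψ x ^ (-qex n - 1) := by
  linear_combination -(hψ.2.2.2 x hx).2

theorem rpow_sub_one_eq (hψ : IsModelSolution n t γ η μ d ψ) (x : ℝ) :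
    ψ x ^ (qex n - 1) = ψ x ^ (2 * qex n) * ψ x ^ (-qex n - 1) := by
  rw [← rpow_add (hψ.pos x)]
  ring_nf

theorem mul_rpow_le_of_deriv2_nonpos (hn : 3 ≤ n) (hd : 0 ≤ d)
    (hψ : IsModelSolution n t γ η μ d ψ) {x : ℝ} (hx : ∀ k : ℤ, x ≠ k * π)
    (h2 : deriv (deriv ψ) x ≤ 0) :
    kap n * (t + lam x) ^ 2 * ψ x ^ (2 * qex n)
      ≤ 2 * η ^ 2 * d ^ (-(2 * qex n)) + kap n * (μ * d ^ (-qex n) + γ + lam x) ^ 2 := by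
  have hcoef := deriv2_coeff_nonneg hn hd
  have heq := hψ.deriv2_eq hx
  rw [hψ.rpow_sub_one_eq] at heq
  refine le_of_mul_le_mul_right ?_ (rpow_pos_of_pos (hψ.pos x) (-qex n - 1))
  nlinarith [mul_nonpos_of_nonneg_of_nonpos hcoef h2]

theorem le_mul_rpow_of_deriv2_nonneg (hn : 3 ≤ n) (hd : 0 ≤ d)
    (hψ : IsModelSolution n t γ η μ d ψ) {x : ℝ} (hx : ∀ k : ℤ, x ≠ k * π)
    (h2 : 0 ≤ deriv (deriv ψ) x) :
    2 * η ^ 2 * d ^ (-(2 * qex n)) + kap n * (μ * d ^ (-qex n) + γ + lam x) ^ 2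
      ≤ kap n * (t + lam x) ^ 2 * ψ x ^ (2 * qex n) := by
  have hcoef := deriv2_coeff_nonneg hn hd
  have heq := hψ.deriv2_eq hx
  rw [hψ.rpow_sub_one_eq] at heq
  refine le_of_mul_le_mul_right ?_ (rpow_pos_of_pos (hψ.pos x) (-qex n - 1))
  nlinarith [mul_nonneg hcoef h2]

theorem le_rpow (hn : 3 ≤ n) (ht : |t| ≠ 1) (hd : 1 ≤ d) (hψ : IsModelSolution n t γ η 0 d ψ)
    (x : ℝ) :
    ψ x ≤ ((2 * η ^ 2 + kap n * (|γ| + 1) ^ 2) / (kap n * (|t| - 1) ^ 2)) ^ (2 * qex n)⁻¹ := by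
  have hq := qex_gt_two hn
  have hκ := kap_pos hn
  have hA : 0 < kap n * (|t| - 1) ^ 2 := mul_pos hκ (sq_pos_of_ne_zero (sub_ne_zero.mpr ht))
  refine hψ.periodic.le_of_forall_deriv2_nonpos_imp_le two_pi_pos.ne' hψ.contDiff
    (eventually_nhdsGT_ne_int_mul pi_pos) (fun _ => hψ.differentiableAt_deriv) (fun y hy h2 => ?_) x
  have hψy := hψ.pos y
  have hbalance := hψ.mul_rpow_le_of_deriv2_nonpos hn (by linarith) hy h2
  simp only [zero_mul, zero_add] at hbalance
  rw [le_rpow_inv_iff_of_pos hψy.le (by positivity) (by linarith), le_div_iff₀ hA]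
  have hdq : d ^ (-(2 * qex n)) ≤ 1 := rpow_le_one_of_one_le_of_nonpos hd (by linarith)
  have hψq := rpow_nonneg hψy.le (2 * qex n)
  calc ψ y ^ (2 * qex n) * (kap n * (|t| - 1) ^ 2)
      ≤ kap n * (t + lam y) ^ 2 * ψ y ^ (2 * qex n) := by
        linear_combination mul_le_mul_of_nonneg_left (sq_abs_sub_one_le_sq_add_lam t y)
          (mul_nonneg hκ.le hψq)
    _ ≤ 2 * η ^ 2 * d ^ (-(2 * qex n)) + kap n * (γ + lam y) ^ 2 := hbalance
    _ ≤ 2 * η ^ 2 + kap n * (|γ| + 1) ^ 2 :=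
        add_le_add (mul_le_of_le_one_right (by positivity) hdq)
          (mul_le_mul_of_nonneg_left (sq_add_lam_le γ y) hκ.le)

theorem rpow_le (hn : 3 ≤ n) (hd : 0 ≤ d) (hψ : IsModelSolution n t γ η 0 d ψ) (x : ℝ) :
    ((|γ| - 1) ^ 2 / (|t| + 1) ^ 2) ^ (2 * qex n)⁻¹ ≤ ψ x := by
  have hq := qex_gt_two hn
  have hκ := kap_pos hn
  refine hψ.periodic.le_of_forall_deriv2_nonneg_imp_le two_pi_pos.ne' hψ.contDiff
    (eventually_nhdsGT_ne_int_mul pi_pos) (fun _ => hψ.differentiableAt_deriv) (fun y hy h2 => ?_) x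
  have hψy := hψ.pos y
  have hbalance := hψ.le_mul_rpow_of_deriv2_nonneg hn hd hy h2
  simp only [zero_mul, zero_add] at hbalance
  rw [rpow_inv_le_iff_of_pos (by positivity) hψy.le (by linarith), div_le_iff₀ (by positivity)]
  have hψq := rpow_nonneg hψy.le (2 * qex n)
  refine le_of_mul_le_mul_left ?_ hκ
  calc kap n * (|γ| - 1) ^ 2
      ≤ 2 * η ^ 2 * d ^ (-(2 * qex n)) + kap n * (γ + lam y) ^ 2 := by
        have := rpow_nonneg hd (-(2 * qex n))
        exact le_add_of_nonneg_of_le (by positivity)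
          (mul_le_mul_of_nonneg_left (sq_abs_sub_one_le_sq_add_lam γ y) hκ.le)
    _ ≤ kap n * (t + lam y) ^ 2 * ψ y ^ (2 * qex n) := hbalance
    _ ≤ kap n * (ψ y ^ (2 * qex n) * (|t| + 1) ^ 2) := by
        linear_combination mul_le_mul_of_nonneg_left (sq_add_lam_le t y) (mul_nonneg hκ.le hψq)

theorem le_modelNonlinearity_sub (hn : 3 ≤ n) (hd : 0 ≤ d)
    (hψ : IsModelSolution n t γ η 0 d ψ) {φ : ℝ → ℝ} (hφ : IsModelSolution n t γ 0 0 d φ)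
    {x : ℝ} (hx : ∀ k : ℤ, x ≠ k * π) (h2 : deriv (deriv φ) x ≤ deriv (deriv ψ) x) :
    2 * η ^ 2 * d ^ (-(2 * qex n)) * ψ x ^ (-qex n - 1)
      ≤ modelNonlinearity n t γ x (ψ x) - modelNonlinearity n t γ x (φ x) := by
  have hcoef := deriv2_coeff_nonneg hn hd
  unfold modelNonlinearity
  linear_combination mul_le_mul_of_nonneg_left h2 hcoef + hψ.deriv2_eq hx - hφ.deriv2_eq hx

end IsModelSolution

theorem exists_pos_add_mul_rpow_le {n : ℕ} {t γ η : ℝ} (hn : 3 ≤ n) (hη : η ≠ 0) {m M : ℝ}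
    (hm : 0 < m) (hM : 0 < M) :
    ∃ c > 0, ∀ d, 0 < d → ∀ ψ φ : ℝ → ℝ,
      IsModelSolution n t γ η 0 d ψ → IsModelSolution n t γ 0 0 d φ →
      (∀ x, ψ x ≤ M) → (∀ x, m ≤ φ x) → ∀ x, φ x + c * d ^ (-(2 * qex n)) ≤ ψ x := by
  have hq := qex_gt_two hn
  obtain ⟨K, hK, hlip⟩ := exists_modelNonlinearity_sub_le hn t γ hm hM
  refine ⟨2 * η ^ 2 * M ^ (-qex n - 1) / K, by positivity, fun d hd ψ φ hψ hφ hψM hφm x => ?_⟩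
  have hderiv : deriv (ψ - φ) = deriv ψ - deriv φ := funext fun y =>
    deriv_sub (hψ.contDiff.differentiable one_ne_zero y) (hφ.contDiff.differentiable one_ne_zero y)
  suffices 2 * η ^ 2 * M ^ (-qex n - 1) / K * d ^ (-(2 * qex n)) ≤ (ψ - φ) x by
    rw [Pi.sub_apply] at this; linarith
  refine (hψ.periodic.sub hφ.periodic).le_of_forall_deriv2_nonneg_imp_le two_pi_pos.ne'
    (hψ.contDiff.sub hφ.contDiff) (eventually_nhdsGT_ne_int_mul pi_pos)
    (fun y hy => hderiv ▸ (hψ.differentiableAt_deriv hy).sub (hφ.differentiableAt_deriv hy))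
    (fun y hy h2 => ?_) x
  rw [hderiv, deriv_sub (hψ.differentiableAt_deriv hy) (hφ.differentiableAt_deriv hy),
    sub_nonneg] at h2
  have hgap := hψ.le_modelNonlinearity_sub hn hd.le hφ hy h2
  have hψy := hψ.pos y
  have hdq := rpow_pos_of_pos hd (-(2 * qex n))
  have hMq : M ^ (-qex n - 1) ≤ ψ y ^ (-qex n - 1) :=
    rpow_le_rpow_of_nonpos hψy (hψM y) (by linarith)
  have hlow : 2 * η ^ 2 * M ^ (-qex n - 1) * d ^ (-(2 * qex n))
      ≤ modelNonlinearity n t γ y (ψ y) - modelNonlinearity n t γ y (φ y) :=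
    le_trans (by rw [mul_right_comm]; gcongr) hgap
  have hlt : φ y < ψ y := by
    by_contra! hle
    have hmono := monotoneOn_modelNonlinearity hn t γ y hψy (hφ.pos y) hle
    have hpos : 0 < 2 * η ^ 2 * M ^ (-qex n - 1) * d ^ (-(2 * qex n)) := by positivity
    linarith
  rw [Pi.sub_apply, div_mul_eq_mul_div, div_le_iff₀ hK, mul_comm _ K]
  exact hlow.trans (hlip y _ _ (hφm y) hlt.le (hψM y))

/-- Lower barrier above the vanishing-TT solution (Proposition 3.29). -/
theorem lower_barrier_above_vanishing_TT (n : ℕ) (hn : 3 ≤ n) (t γ η : ℝ)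
    (hγ : -1 < γ ∧ γ < 1) (ht : |t| ≠ 1) (hη : η ≠ 0) :
    ∃ c : ℝ, 0 < c ∧ ∃ D : ℝ, 0 < D ∧
      ∀ d : ℝ, D ≤ d →
        ∀ ψ ψhat : ℝ → ℝ,
          IsModelSolution n t γ η 0 d ψ → IsModelSolution n t γ 0 0 d ψhat →
          ∀ x : ℝ, ψhat x + c * d ^ (-(2 * qex n)) ≤ ψ x := by
  have hκ := kap_pos hn
  have hγ1 : |γ| - 1 ≠ 0 := by rw [sub_ne_zero]; exact (abs_lt.mpr hγ).ne
  have ht1 : |t| - 1 ≠ 0 := sub_ne_zero.mpr ht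
  obtain ⟨c, hc, hgap⟩ := exists_pos_add_mul_rpow_le (t := t) (γ := γ) hn hη
    (m := ((|γ| - 1) ^ 2 / (|t| + 1) ^ 2) ^ (2 * qex n)⁻¹)
    (M := ((2 * η ^ 2 + kap n * (|γ| + 1) ^ 2) / (kap n * (|t| - 1) ^ 2)) ^ (2 * qex n)⁻¹)
    (by positivity) (by positivity)
  exact ⟨c, hc, 1, one_pos, fun d hd ψ ψhat hψ hψhat => hgap d (by linarith) ψ ψhat hψ hψhat
    (hψ.le_rpow hn ht hd) (hψhat.rpow_le hn (by linarith))⟩
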